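/- A judgement c ⇒ r is inductively derivable in the big-step rules Rules if and only if, starting from the initial partial evaluation tree consisting of the single node c ⇒ ?, there is a finite sequence of transition steps reaching a partial evaluation tree whose root is labelled c ⇒ r. -/

import Mathlib

/-- Judgements over configurations `C` and extended results `Option R`
    (`none` stands for the special extra result such as `?`, `wrong`, or `∞`). -/
abbrev Judg (C R : Type) := C × Option R

/-- Lift a complete judgement to an extended judgement. -/
def liftJ {C R : Type} (j : C × R) : Judg C R := (j.1, some j.2)

/-- Bounded-premises condition. -/
def BP {C R : Type} (Rules : Set (List (C × R) × (C × R))) : Prop :=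
  ∀ c : C, ∃ b : ℕ, ∀ js res, (js, (c, res)) ∈ Rules → js.length ≤ b

/-- The extended rule set `Rules_?`: original rules (lifted), start axioms
    `c ⇒ ?`, and partial rules. -/
def RulesQ {C R : Type} (Rules : Set (List (C × R) × (C × R))) :
    Set (List (Judg C R) × Judg C R) :=
  { r | (∃ c : C, r = ([], (c, none)))
      ∨ (∃ (js : List (C × R)) (c : C) (res : R), (js, (c, res)) ∈ Rules ∧ r = (js.map liftJ, (c, some res)))
      ∨ (∃ (js : List (C × R)) (c : C) (res : R) (i : ℕ) (hi : i < js.length) (u : Option R),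
          (js, (c, res)) ∈ Rules ∧
          r = ((js.take i).map liftJ ++ [((js[i]'hi).1, u)], (c, none))) }

/-- Ordered trees labelled in `L`: partial functions from positions (lists of
    child indices) to labels, with nonempty, prefix-closed,
    sibling-downward-closed domain. -/
structure OTree (L : Type) where
  label : List ℕ → Option L
  root_isSome : (label []).isSome
  pref : ∀ α n, (label (α ++ [n])).isSome → (label α).isSome
  sib : ∀ α n k, (label (α ++ [n])).isSome → k ≤ n → (label (α ++ [k])).isSome

/-- A tree is an evaluation tree in a rule set: at every node, the ordered
    children labels together with the node label form a rule. -/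
def IsTreeIn {L : Type} (Rules : Set (List L × L)) (t : OTree L) : Prop :=
  ∀ α l, t.label α = some l →
    ∃ ps : List L, (∀ i : ℕ, t.label (α ++ [i]) = ps[i]?) ∧ (ps, l) ∈ Rules

/-- Partial evaluation trees: evaluation trees in `Rules_?`. -/
def IsPET {C R : Type} (Rules : Set (List (C × R) × (C × R)))
    (t : OTree (Judg C R)) : Prop :=
  IsTreeIn (RulesQ Rules) t

/-- The refinement relation `⊑` on trees labelled by possibly-incomplete
    judgements. -/
def TreeLE {C R : Type} (t t' : OTree (Judg C R)) : Prop :=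
  (∀ α, (t.label α).isSome → (t'.label α).isSome) ∧
  ∀ α c u, t.label α = some (c, u) →
    (∃ (u' : Option R), t'.label α = some (c, u')) ∧
    (u.isSome → ∀ β, t.label (α ++ β) = t'.label (α ++ β))

/-- Strict refinement `⊏`. -/
def TreeLT {C R : Type} (t t' : OTree (Judg C R)) : Prop :=
  TreeLE t t' ∧ t ≠ t'

/-- A tree is finite if its domain is finite. -/
def TreeFinite {L : Type} (t : OTree L) : Prop :=
  Set.Finite {α | (t.label α).isSome}

/-- Well-formedness: every subtree rooted at a complete node is finite. -/
def WellFormed {C R : Type} (t : OTree (Judg C R)) : Prop :=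
  ∀ α c r, t.label α = some (c, some r) →
    Set.Finite {β | (t.label (α ++ β)).isSome}

/-- `t` is a least upper bound of the sequence `f` w.r.t. `⊑`. -/
def IsLubSeq {C R : Type} (f : ℕ → OTree (Judg C R)) (t : OTree (Judg C R)) : Prop :=
  (∀ n, TreeLE (f n) t) ∧ ∀ t', (∀ n, TreeLE (f n) t') → TreeLE t t'

/-- Inductive derivability in a rule set with finite-list premises. -/
inductive IndDerives {J : Type} (Rules : Set (List J × J)) : J → Prop where
  | node (ps : List J) (j : J) : (ps, j) ∈ Rules →
      (∀ p ∈ ps, IndDerives Rules p) → IndDerives Rules j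

/-- A set of judgements is consistent w.r.t. a rule set. -/
def ConsistentL {J : Type} (Rules : Set (List J × J)) (X : Set J) : Prop :=
  ∀ j ∈ X, ∃ (ps : List J), (ps, j) ∈ Rules ∧ ∀ p ∈ ps, p ∈ X

/-- Coinductive derivability: membership in some consistent set. -/
def CoDerives {J : Type} (Rules : Set (List J × J)) (j : J) : Prop :=
  ∃ (X : Set J), ConsistentL Rules X ∧ j ∈ X

/-- Derivability in a generalised inference system (rules + corules):
    membership in a consistent set all of whose elements have a finite
    derivation using both rules and corules. -/
def GenDerives {J : Type} (rules corules : Set (List J × J)) (j : J) : Prop :=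
  ∃ (X : Set J), ConsistentL rules X ∧ (∀ x ∈ X, IndDerives (rules ∪ corules) x) ∧ j ∈ X
/-- The single-node tree. -/
def leafT {L : Type} (l : L) : OTree L where
  label α := if α = [] then some l else none
  root_isSome := by simp
  pref := by
    intro α n h
    simp at h
  sib := by
    intro α n k h _
    simp at h

/-- The tree with root label `l` and ordered list of immediate subtrees `ts`. -/
def nodeT {L : Type} (l : L) (ts : List (OTree L)) : OTree L where
  label α :=
    match α with
    | [] => some l
    | i :: β => (ts[i]?).bind fun t => t.label β
  root_isSome := by simp
  pref := by
    intro α n h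
    match α with
    | [] => rfl
    | i :: β =>
      replace h : (ts[i]?.bind fun t => t.label (β ++ [n])).isSome = true := h
      show (ts[i]?.bind fun t => t.label β).isSome = true
      rcases hts : ts[i]? with _ | t
      · rw [hts] at h; simp at h
      · rw [hts] at h
        simpa using t.pref β n (by simpa using h)
  sib := by
    intro α n k h hk
    match α with
    | [] =>
      replace h : (ts[n]?.bind fun t => t.label []).isSome = true := h
      show (ts[k]?.bind fun t => t.label []).isSome = true
      rcases hts : ts[n]? with _ | t
      · rw [hts] at h; simp at h
      · have hn : n < ts.length := by
          by_contra hc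
          rw [List.getElem?_eq_none (by omega)] at hts
          cases hts
        have hk' : k < ts.length := lt_of_le_of_lt hk hn
        rw [List.getElem?_eq_getElem hk']
        simpa using (ts[k]'hk').root_isSome
    | i :: β =>
      replace h : (ts[i]?.bind fun t => t.label (β ++ [n])).isSome = true := h
      show (ts[i]?.bind fun t => t.label (β ++ [k])).isSome = true
      rcases hts : ts[i]? with _ | t
      · rw [hts] at h; simp at h
      · rw [hts] at h
        simpa using t.sib β n k (by simpa using h) hk

/-- The transition relation on (finite) partial evaluation trees. -/
inductive Step {C R : Type} (Rules : Set (List (C × R) × (C × R))) :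
    OTree (Judg C R) → OTree (Judg C R) → Prop where
  | tr1 (c : C) (r : R) (h : ([], (c, r)) ∈ Rules) :
      Step Rules (leafT (c, none)) (leafT (c, some r))
  | tr2 (js : List (C × R)) (c : C) (res : R) (hne : js ≠ [])
      (h : (js, (c, res)) ∈ Rules) :
      Step Rules (leafT (c, none))
        (nodeT (c, none) [leafT ((js.head hne).1, none)])
  | tr3 (js : List (C × R)) (c : C) (res : R) (trs : List (OTree (Judg C R)))
      (h : (js, (c, res)) ∈ Rules) (hlen : trs.length = js.length)
      (hroots : ∀ (k : ℕ) (hk : k < js.length),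
        ∃ (t : OTree (Judg C R)), trs[k]? = some t ∧
          t.label [] = some (liftJ (js[k]'hk))) :
      Step Rules (nodeT (c, none) trs) (nodeT (c, some res) trs)
  | tr4 (js : List (C × R)) (c : C) (res : R) (trs : List (OTree (Judg C R)))
      (h : (js, (c, res)) ∈ Rules) (hne : trs ≠ [])
      (hlt : trs.length < js.length)
      (hroots : ∀ (k : ℕ) (hk : k < trs.length),
        ∃ (t : OTree (Judg C R)), trs[k]? = some t ∧
          t.label [] = some (liftJ (js[k]'(Nat.lt_trans hk hlt)))) :
      Step Rules (nodeT (c, none) trs)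
        (nodeT (c, none) (trs ++ [leafT ((js[trs.length]'hlt).1, none)]))
  | tr5 (js : List (C × R)) (c : C) (res : R) (trs : List (OTree (Judg C R)))
      (t t' : OTree (Judg C R))
      (h : (js, (c, res)) ∈ Rules)
      (hlt : trs.length < js.length)
      (hroots : ∀ (k : ℕ) (hk : k < trs.length),
        ∃ (s : OTree (Judg C R)), trs[k]? = some s ∧
          s.label [] = some (liftJ (js[k]'(Nat.lt_trans hk hlt))))
      (hconf : t.label [] = some ((js[trs.length]'hlt).1, none))
      (hstep : Step Rules t t') :
      Step Rules (nodeT (c, none) (trs ++ [t])) (nodeT (c, none) (trs ++ [t']))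

/-!
Soundness: every complete node of a tree reachable from `c ⇒ ?` is derivable, because a
transition completes a node only once its children carry the complete premises of a rule.
Completeness, by induction on the derivation: the premises of the last rule are opened one at a
time as fresh leaves, and the transition sequence of each premise is replayed inside its leaf.
-/

section Trees

variable {L : Type}

@[simp] lemma leafT_label (l : L) (α : List ℕ) :
    (leafT l).label α = if α = [] then some l else none := rfl

@[simp] lemma nodeT_label_nil (l : L) (ts : List (OTree L)) :
    (nodeT l ts).label [] = some l := rfl

@[simp] lemma nodeT_label_cons (l : L) (ts : List (OTree L)) (i : ℕ) (β : List ℕ) :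
    (nodeT l ts).label (i :: β) = ts[i]?.bind fun t => t.label β := rfl

lemma OTree.ext_label {t t' : OTree L} (h : t.label = t'.label) : t = t' := by
  cases t; cases t'; simpa using h

lemma nodeT_nil (l : L) : nodeT l [] = leafT l :=
  OTree.ext_label <| funext fun α => by cases α <;> simp

end Trees

variable {C R : Type} {Rules : Set (List (C × R) × (C × R))}

section Soundness

def CompleteNodesDerivable (Rules : Set (List (C × R) × (C × R))) (t : OTree (Judg C R)) : Prop :=
  ∀ α (c : C) (r : R), t.label α = some (c, some r) → IndDerives Rules (c, r)

lemma completeNodesDerivable_nodeT_iff {l : Judg C R} {ts : List (OTree (Judg C R))} :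
    CompleteNodesDerivable Rules (nodeT l ts) ↔
      (∀ (c : C) (r : R), l = (c, some r) → IndDerives Rules (c, r)) ∧
        ∀ t ∈ ts, CompleteNodesDerivable Rules t := by
  constructor
  · intro h
    refine ⟨fun c r hl => h [] c r (by simp [hl]), fun t ht β c r hβ => ?_⟩
    obtain ⟨i, hi, rfl⟩ := List.getElem_of_mem ht
    exact h (i :: β) c r (by simp [hi, hβ])
  · rintro ⟨hroot, hchildren⟩ (_ | ⟨i, β⟩) c r hl
    · exact hroot c r (by simpa using hl)
    · obtain ⟨t, hi, hβ⟩ := Option.bind_eq_some_iff.mp hl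
      exact hchildren t (List.mem_of_getElem? hi) β c r hβ

lemma completeNodesDerivable_leafT_none (c : C) :
    CompleteNodesDerivable Rules (leafT (c, none)) := by
  rw [← nodeT_nil, completeNodesDerivable_nodeT_iff]
  simp

lemma Step.completeNodesDerivable {s s' : OTree (Judg C R)} (h : Step Rules s s')
    (hs : CompleteNodesDerivable Rules s) : CompleteNodesDerivable Rules s' := by
  induction h with
  | tr1 c r hr =>
    rw [← nodeT_nil, completeNodesDerivable_nodeT_iff]
    simp only [Prod.mk.injEq, Option.some.injEq, List.not_mem_nil]
    exact ⟨by rintro _ _ ⟨rfl, rfl⟩; exact .node [] _ hr (by simp), by simp⟩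
  | tr2 =>
    rw [completeNodesDerivable_nodeT_iff]
    simp [completeNodesDerivable_leafT_none]
  | tr3 js _ _ _ hr _ hroots =>
    rw [completeNodesDerivable_nodeT_iff] at hs ⊢
    refine ⟨?_, hs.2⟩
    rintro _ _ ⟨rfl, rfl⟩
    refine .node js _ hr fun p hp => ?_
    obtain ⟨k, hk, rfl⟩ := List.getElem_of_mem hp
    obtain ⟨t, ht, hroot⟩ := hroots k hk
    exact hs.2 t (List.mem_of_getElem? ht) [] _ _ hroot
  | tr4 =>
    rw [completeNodesDerivable_nodeT_iff] at hs ⊢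
    refine ⟨hs.1, fun t ht => ?_⟩
    rcases List.mem_append.mp ht with ht | ht
    · exact hs.2 t ht
    · rw [List.mem_singleton.mp ht]
      exact completeNodesDerivable_leafT_none _
  | tr5 _ _ _ trs t _ _ _ _ _ _ ih =>
    rw [completeNodesDerivable_nodeT_iff] at hs ⊢
    refine ⟨hs.1, fun u hu => ?_⟩
    rcases List.mem_append.mp hu with hu | hu
    · exact hs.2 u (List.mem_append_left _ hu)
    · rw [List.mem_singleton.mp hu]
      exact ih (hs.2 t (by simp))

lemma completeNodesDerivable_of_reflTransGen {s t : OTree (Judg C R)}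
    (h : Relation.ReflTransGen (Step Rules) s t) (hs : CompleteNodesDerivable Rules s) :
    CompleteNodesDerivable Rules t := by
  induction h with
  | refl => exact hs
  | tail _ hstep ih => exact hstep.completeNodesDerivable ih

end Soundness

section Completeness

lemma Step.root {s s' : OTree (Judg C R)} (h : Step Rules s s') :
    ∃ d : C, s.label [] = some (d, none) ∧ ∃ u : Option R, s'.label [] = some (d, u) := by
  cases h <;> exact ⟨_, rfl, _, rfl⟩

lemma eq_of_reflTransGen_of_root_complete {s t : OTree (Judg C R)}
    (h : Relation.ReflTransGen (Step Rules) s t) {d : C} {r : R}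
    (hs : s.label [] = some (d, some r)) : t = s := by
  rcases h.cases_head with rfl | ⟨s', hs', -⟩
  · rfl
  · obtain ⟨d', hd', -⟩ := hs'.root
    simp [hs] at hd'

/-- `Step.tr5` only applies while the last child's root is incomplete; once a step completes it,
the chain ends there by `eq_of_reflTransGen_of_root_complete`. -/
lemma reflTransGen_nodeT_lastChild {js : List (C × R)} {c : C} {res : R}
    {trs : List (OTree (Judg C R))} (hr : (js, (c, res)) ∈ Rules)
    (hlt : trs.length < js.length)
    (hroots : ∀ k (hk : k < trs.length), ∃ s : OTree (Judg C R), trs[k]? = some s ∧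
      s.label [] = some (liftJ (js[k]'(Nat.lt_trans hk hlt))))
    {u t : OTree (Judg C R)} (h : Relation.ReflTransGen (Step Rules) u t)
    (hu : u.label [] = some ((js[trs.length]'hlt).1, none)) :
    Relation.ReflTransGen (Step Rules)
      (nodeT (c, none) (trs ++ [u])) (nodeT (c, none) (trs ++ [t])) := by
  induction h using Relation.ReflTransGen.head_induction_on with
  | refl => exact .refl
  | @head a b hab hbt ih =>
    have hstep := Step.tr5 js c res trs a b hr hlt hroots hu hab
    obtain ⟨d, hd, v, hv⟩ := hab.root
    obtain rfl : d = (js[trs.length]'hlt).1 := by simp_all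
    cases v with
    | none => exact .head hstep (ih hv)
    | some r =>
      rw [eq_of_reflTransGen_of_root_complete hbt hv]
      exact .single hstep

lemma step_nodeT_append_leafT {js : List (C × R)} {c : C} {res : R}
    {trs : List (OTree (Judg C R))} (hr : (js, (c, res)) ∈ Rules)
    (hlt : trs.length < js.length)
    (hroots : ∀ k (hk : k < trs.length), ∃ s : OTree (Judg C R), trs[k]? = some s ∧
      s.label [] = some (liftJ (js[k]'(Nat.lt_trans hk hlt)))) :
    Step Rules (nodeT (c, none) trs)
      (nodeT (c, none) (trs ++ [leafT ((js[trs.length]'hlt).1, none)])) := by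
  by_cases hne : trs = []
  · subst hne
    obtain ⟨j, js, rfl⟩ := List.exists_cons_of_length_pos hlt
    rw [nodeT_nil]
    exact Step.tr2 _ c res (List.cons_ne_nil j js) hr
  · exact Step.tr4 js c res trs hr hne hlt hroots

/-- Each round adds a leaf for the next premise and runs that premise's transitions inside it. -/
lemma reflTransGen_nodeT_take {js : List (C × R)} {c : C} {res : R}
    (hr : (js, (c, res)) ∈ Rules) {ts : List (OTree (Judg C R))} (hlen : ts.length = js.length)
    (hts : ∀ k (hk : k < js.length),
      Relation.ReflTransGen (Step Rules) (leafT (js[k].1, none)) (ts[k]'(hlen ▸ hk)) ∧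
      (ts[k]'(hlen ▸ hk)).label [] = some (liftJ js[k])) :
    ∀ n ≤ js.length,
      Relation.ReflTransGen (Step Rules) (leafT (c, none)) (nodeT (c, none) (ts.take n))
  | 0, _ => by simp [nodeT_nil, Relation.ReflTransGen.refl]
  | n + 1, hn => by
    have hlt : (ts.take n).length < js.length := by simp only [List.length_take]; omega
    have hroots : ∀ k (hk : k < (ts.take n).length), ∃ s : OTree (Judg C R),
        (ts.take n)[k]? = some s ∧ s.label [] = some (liftJ (js[k]'(Nat.lt_trans hk hlt))) :=
      fun k hk => ⟨_, List.getElem?_eq_getElem hk, by simpa using (hts k _).2⟩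
    have hn' : (ts.take n).length = n := by simp only [List.length_take]; omega
    have hnext := reflTransGen_nodeT_lastChild hr hlt hroots (hts n (by omega)).1
      (by simp [hn'])
    rw [List.take_add_one, List.getElem?_eq_getElem (by omega), Option.toList_some]
    refine (reflTransGen_nodeT_take hr hlen hts n (by omega)).tail
      (step_nodeT_append_leafT hr hlt hroots) |>.trans ?_
    simpa [hn'] using hnext

lemma IndDerives.reflTransGen {j : C × R} (h : IndDerives Rules j) :
    ∃ t : OTree (Judg C R),
      Relation.ReflTransGen (Step Rules) (leafT (j.1, none)) t ∧ t.label [] = some (liftJ j) := by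
  induction h with
  | node js j hr _ ih =>
    obtain ⟨c, r⟩ := j
    choose T hT using ih
    let ts := List.ofFn fun k : Fin js.length => T js[k] (List.getElem_mem _)
    have hlen : ts.length = js.length := List.length_ofFn
    have hts : ∀ k (hk : k < js.length),
        Relation.ReflTransGen (Step Rules) (leafT (js[k].1, none)) (ts[k]'(hlen ▸ hk)) ∧
        (ts[k]'(hlen ▸ hk)).label [] = some (liftJ js[k]) := fun k hk => by
      simpa [ts] using hT js[k] (List.getElem_mem hk)
    refine ⟨nodeT (c, some r) ts, ?_, rfl⟩
    have hchain := reflTransGen_nodeT_take hr hlen hts js.length le_rfl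
    rw [← hlen, List.take_length] at hchain
    exact hchain.tail <| Step.tr3 js c r ts hr hlen fun k hk =>
      ⟨_, List.getElem?_eq_getElem (hlen ▸ hk), (hts k hk).2⟩

end Completeness

theorem derives_iff_reachable {C R : Type}
    (Rules : Set (List (C × R) × (C × R))) (c : C) (r : R) :
    IndDerives Rules (c, r) ↔
      ∃ t : OTree (Judg C R),
        Relation.ReflTransGen (Step Rules) (leafT (c, none)) t ∧
        t.label [] = some (c, some r) := by
  constructor
  · exact IndDerives.reflTransGen
  · rintro ⟨t, hchain, hroot⟩
    exact completeNodesDerivable_of_reflTransGen hchain (completeNodesDerivable_leafT_none c)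
      [] c r hroot
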